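/- Let I = (G,q,π) be an instance of Unique Label Cover with q ≥ 2 such that φ_G ≥ φ for some φ > 0 and OPT(I) ≤ 1 − ρ for some 0 < ρ ≤ 1, and let G' be its label-extended graph. Then every nonempty subset S' of the vertex set of G' with μ_{G'}(S') ≤ μ_{G'}/q satisfies φ_{G'}(S') ≥ ρφ/(6q); that is, φ_{G'}(q) ≥ ρφ/(6q). -/

import Mathlib

open scoped Classical
open Matrix

noncomputable section

namespace Sublinear

variable {V : Type*}

/-- The degree `d(v)` of a vertex, as a real number. -/
def deg [Fintype V] (G : SimpleGraph V) (v : V) : ℝ :=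
  ((Finset.univ.filter fun u => G.Adj v u).card : ℝ)

/-- The volume `μ_G(S)` of a set of vertices. -/
def vol [Fintype V] (G : SimpleGraph V) (S : Set V) : ℝ :=
  ∑ v ∈ Finset.univ.filter (fun v => v ∈ S), deg G v

/-- The number of ordered adjacent pairs `(u,v)` with `u ∈ S`, `v ∈ T`.
For disjoint `S`, `T` this equals the number `e_G(S,T)` of edges between `S` and `T`. -/
def eB [Fintype V] (G : SimpleGraph V) (S T : Set V) : ℝ :=
  (((Finset.univ : Finset (V × V)).filter
      fun p => p.1 ∈ S ∧ p.2 ∈ T ∧ G.Adj p.1 p.2).card : ℝ)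

/-- The number `e_G(S)` of edges with both endpoints in `S`. -/
def eIn [Fintype V] (G : SimpleGraph V) (S : Set V) : ℝ := eB G S S / 2

/-- The conductance `φ_G(S)` of a set of vertices. -/
def cond [Fintype V] (G : SimpleGraph V) (S : Set V) : ℝ :=
  eB G S Sᶜ / vol G S

/-- The conductance `φ_G` of the graph: the minimum of `φ_G(S)` over nonempty `S`
with `μ_G(S) ≤ μ_G/2`. -/
def conductance [Fintype V] (G : SimpleGraph V) : ℝ :=
  sInf {x | ∃ S : Set V, S.Nonempty ∧ vol G S ≤ vol G Set.univ / 2 ∧ x = cond G S}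

/-- The label-extended graph `G'` of a Unique Label Cover instance `I = (G, q, π)`
(with labels `Fin q`): vertices are pairs `(u,i)`, and `(u,i)` is adjacent to
`(v,j)` iff `{u,v}` is an edge of `G` and `j = π u v i`. -/
def ulcExt {V : Type*} (G : SimpleGraph V) {q : ℕ} (π : V → V → Equiv.Perm (Fin q))
    (hπ : ∀ u v, G.Adj u v → π v u = (π u v)⁻¹) : SimpleGraph (V × Fin q) where
  Adj p p' := G.Adj p.1 p'.1 ∧ p'.2 = π p.1 p'.1 p.2
  symm := by
    constructor
    rintro ⟨u, i⟩ ⟨v, j⟩ ⟨hadj, hj⟩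
    refine ⟨hadj.symm, ?_⟩
    simp only at hj ⊢
    rw [hπ u v hadj, hj]
    simp
  loopless := by
    constructor
    rintro ⟨u, i⟩ ⟨hadj, _⟩
    exact G.loopless.irrefl u hadj

/-- The fraction of the edges of `G` that are satisfied by the assignment `ψ`
in the Unique Label Cover instance `(G, q, π)`: an edge `{u,v}` is satisfied
if `ψ v = π u v (ψ u)`. -/
def ulcSatFrac [Fintype V] (G : SimpleGraph V) {q : ℕ}
    (π : V → V → Equiv.Perm (Fin q)) (ψ : V → Fin q) : ℝ :=
  (((Finset.univ : Finset (V × V)).filter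
      fun p => G.Adj p.1 p.2 ∧ ψ p.2 = π p.1 p.2 (ψ p.1)).card : ℝ)
    / eB G Set.univ Set.univ


/-! Let `T ⊆ V` be the set of vertices carrying a label in `S'`. Every edge of `G` leaving `T`
lifts to an edge of `G'` leaving `S'`, and `μ(S') ≤ q μ(T)`; so if `μ(T) ≤ μ/2` the expansion of
`T` in `G` already gives the bound. Otherwise `μ(Tᶜ) ≤ μ/2`. Labelling every vertex by one of its
labels in `S'` violates at least `ρμ` ordered edges, and a violated edge either touches a vertex
without exactly one label in `S'` (these have volume at most `2μ(Tᶜ) + μ(S') - μ ≤ 2μ(Tᶜ)`) or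
lifts to an edge leaving `S'`. Hence `ρμ ≤ e(S',S'ᶜ) + 4μ(Tᶜ)`, and together with
`φ μ(Tᶜ) ≤ e(T,Tᶜ) ≤ e(S',S'ᶜ)` and `φ ≤ 1` this gives `ρφ μ(S') ≤ ρφμ ≤ 5 e(S',S'ᶜ)`. -/

open Finset

section Graph

variable [Fintype V] (G : SimpleGraph V)

lemma deg_nonneg (v : V) : 0 ≤ deg G v := Nat.cast_nonneg _

lemma vol_eq_sum_ite (A : Set V) : vol G A = ∑ v, if v ∈ A then deg G v else 0 := by
  rw [vol, sum_filter]

lemma vol_nonneg (A : Set V) : 0 ≤ vol G A := sum_nonneg fun v _ => deg_nonneg G v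

lemma vol_univ : vol G Set.univ = ∑ v, deg G v := by simp [vol_eq_sum_ite]

lemma vol_add_vol_compl (A : Set V) : vol G A + vol G Aᶜ = vol G Set.univ := by
  rw [vol_eq_sum_ite, vol_eq_sum_ite, vol_univ, ← sum_add_distrib]
  exact sum_congr rfl fun v _ => by by_cases hv : v ∈ A <;> simp [hv]

lemma vol_pos (hdeg : ∀ v, 1 ≤ deg G v) {A : Set V} (hA : A.Nonempty) : 0 < vol G A := by
  obtain ⟨a, ha⟩ := hA
  exact (zero_lt_one.trans_le (hdeg a)).trans_le
    (single_le_sum (fun v _ => deg_nonneg G v) (by simpa using ha))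

lemma eB_nonneg (A B : Set V) : 0 ≤ eB G A B := Nat.cast_nonneg _

lemma eB_comm (A B : Set V) : eB G A B = eB G B A := by
  unfold eB
  congr 1
  exact card_nbij' Prod.swap Prod.swap (by intro p; simp [G.adj_comm]; tauto)
    (by intro p; simp [G.adj_comm]; tauto) (fun _ _ => rfl) (fun _ _ => rfl)

lemma eB_univ_right (A : Set V) : eB G A Set.univ = vol G A := by
  rw [eB, card_filter, vol_eq_sum_ite]
  push_cast
  rw [Fintype.sum_prod_type]
  refine sum_congr rfl fun u _ => ?_
  by_cases hu : u ∈ A <;> simp [hu, deg]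

lemma eB_le_vol (A B : Set V) : eB G A B ≤ vol G A := by
  rw [← eB_univ_right]
  unfold eB
  exact_mod_cast card_le_card fun p => by simp only [mem_filter, Set.mem_univ]; tauto

lemma cond_nonneg (A : Set V) : 0 ≤ cond G A := div_nonneg (eB_nonneg G _ _) (vol_nonneg G A)

lemma cond_le_one (A : Set V) : cond G A ≤ 1 := div_le_one_of_le₀ (eB_le_vol G _ _) (vol_nonneg G A)

lemma conductance_le_cond {A : Set V} (hA : A.Nonempty) (hvol : vol G A ≤ vol G Set.univ / 2) :
    conductance G ≤ cond G A :=
  csInf_le ⟨0, by rintro _ ⟨S, -, -, rfl⟩; exact cond_nonneg G S⟩ ⟨A, hA, hvol, rfl⟩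

lemma conductance_le_one : conductance G ≤ 1 := by
  unfold conductance
  rcases Set.eq_empty_or_nonempty
      {x | ∃ S : Set V, S.Nonempty ∧ vol G S ≤ vol G Set.univ / 2 ∧ x = cond G S} with
    h | ⟨_, S, hS, hvol, rfl⟩
  · rw [h, Real.sInf_empty]
    exact zero_le_one
  · exact (conductance_le_cond G hS hvol).trans (cond_le_one G S)

lemma mul_vol_le_eB_compl {φ : ℝ} (hφ : φ ≤ conductance G) {A : Set V}
    (hA : vol G A ≤ vol G Set.univ / 2) : φ * vol G A ≤ eB G A Aᶜ := by
  rcases (vol_nonneg G A).eq_or_lt with h | h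
  · rw [← h, mul_zero]
    exact eB_nonneg G A Aᶜ
  · have hne : A.Nonempty := Set.nonempty_iff_ne_empty.2 fun hA => by simp [hA, vol] at h
    rw [← le_div_iff₀ h]
    exact hφ.trans (conductance_le_cond G hne hA)

lemma card_adj_filter_le (P : V → V → Prop) [DecidableRel P] (U : Set V) :
    (#(univ.filter fun p : V × V => G.Adj p.1 p.2 ∧ P p.1 p.2) : ℝ) ≤
      #(univ.filter fun p : V × V => G.Adj p.1 p.2 ∧ P p.1 p.2 ∧ p.1 ∈ U ∧ p.2 ∈ U) +
        2 * vol G Uᶜ := by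
  have hsub : (univ.filter fun p : V × V => G.Adj p.1 p.2 ∧ P p.1 p.2) ⊆
      (univ.filter fun p : V × V => G.Adj p.1 p.2 ∧ P p.1 p.2 ∧ p.1 ∈ U ∧ p.2 ∈ U) ∪
        (univ.filter fun p : V × V => p.1 ∈ Uᶜ ∧ p.2 ∈ Set.univ ∧ G.Adj p.1 p.2) ∪
        (univ.filter fun p : V × V => p.1 ∈ Set.univ ∧ p.2 ∈ Uᶜ ∧ G.Adj p.1 p.2) := by
    intro p
    simp only [mem_filter, mem_univ, true_and, mem_union, Set.mem_compl_iff, Set.mem_univ]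
    tauto
  have hcard := (card_le_card hsub).trans ((card_union_le _ _).trans (by grw [card_union_le]))
  -- `congr!` only reconciles the decidability instances of the filters with those inside `eB`.
  have hleft : vol G Uᶜ =
      #(univ.filter fun p : V × V => p.1 ∈ Uᶜ ∧ p.2 ∈ Set.univ ∧ G.Adj p.1 p.2) := by
    rw [← eB_univ_right, eB]; congr!
  have hright : vol G Uᶜ =
      #(univ.filter fun p : V × V => p.1 ∈ Set.univ ∧ p.2 ∈ Uᶜ ∧ G.Adj p.1 p.2) := by
    rw [← eB_univ_right, eB_comm, eB]; congr!
  have : (#(univ.filter fun p : V × V => G.Adj p.1 p.2 ∧ P p.1 p.2) : ℝ) ≤ _ :=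
    Nat.cast_le.2 hcard
  push_cast at this
  linarith

lemma sum_deg_mul_le_mul_vol (s : V → ℕ) {q : ℕ} (hs : ∀ v, s v ≤ q) :
    ∑ v, deg G v * s v ≤ q * vol G {v | s v ≠ 0} := by
  rw [vol_eq_sum_ite, mul_sum]
  refine sum_le_sum fun v _ => ?_
  by_cases h : s v = 0
  · simp [h]
  · rw [if_pos (show v ∈ {v | s v ≠ 0} from h), mul_comm]
    exact mul_le_mul_of_nonneg_right (by exact_mod_cast hs v) (deg_nonneg G v)

lemma vol_compl_eq_one_le (s : V → ℕ) :
    vol G {v | s v = 1}ᶜ ≤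
      2 * vol G {v | s v ≠ 0}ᶜ + (∑ v, deg G v * s v - vol G Set.univ) := by
  rw [vol_univ, vol_eq_sum_ite, vol_eq_sum_ite, mul_sum, ← sum_sub_distrib, ← sum_add_distrib]
  refine sum_le_sum fun v _ => ?_
  have hd := deg_nonneg G v
  obtain h | h | h : s v = 0 ∨ s v = 1 ∨ 2 ≤ s v := by omega
  · norm_num [h, two_mul]
  · norm_num [h]
  · have : (2 : ℝ) ≤ s v := by exact_mod_cast h
    norm_num [show s v ≠ 1 by omega, show s v ≠ 0 by omega]
    nlinarith

lemma mul_mul_le_of_cut_bounds {φ ρ q W C : ℝ} (hφ : 0 ≤ φ) (hcond : φ ≤ conductance G)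
    (hρ0 : 0 ≤ ρ) (hρ1 : ρ ≤ 1) (hq : 1 ≤ q) {T : Set V} (hW : 0 ≤ W)
    (hWμ : W ≤ vol G Set.univ) (hWT : W ≤ q * vol G T) (hcut : eB G T Tᶜ ≤ C)
    (hsound : ρ * vol G Set.univ ≤ C + 4 * vol G Tᶜ) : ρ * φ * W ≤ 6 * q * C := by
  have hC := (eB_nonneg G T Tᶜ).trans hcut
  have hφ1 := hcond.trans (conductance_le_one G)
  rcases le_total (vol G T) (vol G Set.univ / 2) with hT | hT
  · have hexp := mul_vol_le_eB_compl G hcond hT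
    calc ρ * φ * W ≤ 1 * φ * (q * vol G T) := by gcongr
      _ = q * (φ * vol G T) := by ring
      _ ≤ q * C := by gcongr; exact hexp.trans hcut
      _ ≤ 6 * q * C := by nlinarith
  · have hTc : vol G Tᶜ ≤ vol G Set.univ / 2 := by linarith [vol_add_vol_compl G T]
    have hexp := mul_vol_le_eB_compl G hcond hTc
    rw [compl_compl, eB_comm] at hexp
    calc ρ * φ * W = φ * (ρ * W) := by ring
      _ ≤ φ * (ρ * vol G Set.univ) := by gcongr
      _ ≤ φ * (C + 4 * vol G Tᶜ) := by gcongr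
      _ = φ * C + 4 * (φ * vol G Tᶜ) := by ring
      _ ≤ 1 * C + 4 * C := by gcongr; exact hexp.trans hcut
      _ ≤ 6 * q * C := by nlinarith

end Graph

section LabelExtended

variable {q : ℕ}

def labelCount (S' : Set (V × Fin q)) (u : V) : ℕ :=
  #(univ.filter fun i : Fin q => (u, i) ∈ S')

lemma labelCount_le (S' : Set (V × Fin q)) (u : V) : labelCount S' u ≤ q :=
  (card_filter_le _ _).trans (card_fin q).le

lemma labelCount_ne_zero_iff {S' : Set (V × Fin q)} {u : V} :
    labelCount S' u ≠ 0 ↔ ∃ i, (u, i) ∈ S' := by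
  simp [labelCount]

lemma eq_of_labelCount_le_one {S' : Set (V × Fin q)} {u : V} (hu : labelCount S' u ≤ 1)
    {i j : Fin q} (hi : (u, i) ∈ S') (hj : (u, j) ∈ S') : i = j :=
  card_le_one.1 hu i (by simpa using hi) j (by simpa using hj)

variable [Fintype V] (G : SimpleGraph V) (π : V → V → Equiv.Perm (Fin q))

def unsatPairs (ψ : V → Fin q) : Finset (V × V) :=
  univ.filter fun p => G.Adj p.1 p.2 ∧ ψ p.2 ≠ π p.1 p.2 (ψ p.1)

lemma mul_vol_univ_le_card_unsatPairs {ρ : ℝ} {ψ : V → Fin q}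
    (h : ulcSatFrac G π ψ ≤ 1 - ρ) : ρ * vol G Set.univ ≤ #(unsatPairs G π ψ) := by
  have hpart : (#(univ.filter fun p : V × V => G.Adj p.1 p.2 ∧ ψ p.2 = π p.1 p.2 (ψ p.1)) : ℝ) +
      #(unsatPairs G π ψ) = vol G Set.univ := by
    rw [← eB_univ_right, eB, unsatPairs, ← Nat.cast_add, ← card_union_of_disjoint]
    · congr 2
      ext p
      simp only [mem_union, mem_filter, mem_univ, true_and, Set.mem_univ]
      tauto
    · exact disjoint_filter.2 fun p _ h h' => h'.2 h.2
  rw [ulcSatFrac, eB_univ_right] at h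
  rcases (vol_nonneg G _).eq_or_lt with h0 | h0
  · rw [← h0, mul_zero]
    positivity
  · rw [div_le_iff₀ h0] at h
    linarith

variable (hπ : ∀ u v, G.Adj u v → π v u = (π u v)⁻¹)

lemma deg_ulcExt (p : V × Fin q) : deg (ulcExt G π hπ) p = deg G p.1 := by
  unfold deg
  congr 1
  refine card_nbij' Prod.fst (fun v => (v, π p.1 v p.2)) ?_ ?_ ?_ ?_
  · intro x hx
    simp only [mem_coe, mem_filter, mem_univ, true_and] at hx ⊢
    exact hx.1
  · intro v hv
    simp only [mem_coe, mem_filter, mem_univ, true_and] at hv ⊢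
    exact ⟨hv, rfl⟩
  · intro x hx
    simp only [mem_coe, mem_filter, mem_univ, true_and] at hx
    exact Prod.ext rfl hx.2.symm
  · intro v _
    rfl

lemma vol_ulcExt (S' : Set (V × Fin q)) :
    vol (ulcExt G π hπ) S' = ∑ u, deg G u * labelCount S' u := by
  rw [vol_eq_sum_ite, Fintype.sum_prod_type]
  refine sum_congr rfl fun u _ => ?_
  simp [deg_ulcExt, labelCount, ← sum_filter, mul_comm]

lemma vol_ulcExt_univ : vol (ulcExt G π hπ) Set.univ = q * vol G Set.univ := by
  rw [vol_ulcExt, vol_univ, mul_sum]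
  exact sum_congr rfl fun u _ => by simp [labelCount, mul_comm]

lemma card_le_eB_ulcExt_compl (S' : Set (V × Fin q)) (ψ : V → Fin q) {A : Finset (V × V)}
    (hA : ∀ p ∈ A, G.Adj p.1 p.2 ∧ (p.1, ψ p.1) ∈ S' ∧ (p.2, π p.1 p.2 (ψ p.1)) ∉ S') :
    (#A : ℝ) ≤ eB (ulcExt G π hπ) S' S'ᶜ := by
  unfold eB
  refine Nat.cast_le.2 (card_le_card_of_injOn (fun p => ((p.1, ψ p.1), (p.2, π p.1 p.2 (ψ p.1))))
    (fun p hp => ?_) (fun p _ p' _ h => ?_))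
  · obtain ⟨hadj, hin, hout⟩ := hA p hp
    simp [ulcExt, hadj, hin, hout]
  · simp only [Prod.mk.injEq] at h
    exact Prod.ext h.1.1 h.2.1

variable {S' : Set (V × Fin q)} {ψ : V → Fin q}

lemma eB_labelled_le_eB_ulcExt_compl (hψ : ∀ u i, (u, i) ∈ S' → (u, ψ u) ∈ S') :
    eB G {u | labelCount S' u ≠ 0} {u | labelCount S' u ≠ 0}ᶜ ≤ eB (ulcExt G π hπ) S' S'ᶜ := by
  refine card_le_eB_ulcExt_compl G π hπ S' ψ fun p hp => ?_
  simp only [mem_filter, mem_univ, true_and, Set.mem_compl_iff, Set.mem_ofPred_eq,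
    not_not] at hp
  obtain ⟨hu, hv, hadj⟩ := hp
  obtain ⟨i, hi⟩ := labelCount_ne_zero_iff.1 hu
  refine ⟨hadj, hψ _ i hi, fun h => ?_⟩
  exact labelCount_ne_zero_iff.2 ⟨_, h⟩ hv

lemma card_unsatPairs_le (hψ : ∀ u i, (u, i) ∈ S' → (u, ψ u) ∈ S') :
    (#(unsatPairs G π ψ) : ℝ) ≤
      eB (ulcExt G π hπ) S' S'ᶜ + 2 * vol G {u | labelCount S' u = 1}ᶜ := by
  refine (card_adj_filter_le G (fun u v => ψ v ≠ π u v (ψ u)) {u | labelCount S' u = 1}).trans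
    (add_le_add_left (card_le_eB_ulcExt_compl G π hπ S' ψ fun p hp => ?_) _)
  simp only [mem_filter, mem_univ, true_and, Set.mem_ofPred_eq] at hp
  obtain ⟨hadj, hunsat, hu, hv⟩ := hp
  obtain ⟨i, hi⟩ := labelCount_ne_zero_iff.1 (hu.trans_ne one_ne_zero)
  obtain ⟨j, hj⟩ := labelCount_ne_zero_iff.1 (hv.trans_ne one_ne_zero)
  exact ⟨hadj, hψ _ i hi, fun h => hunsat (eq_of_labelCount_le_one hv.le (hψ _ j hj) h)⟩

end LabelExtended

theorem ulc_soundness_small_set_expansion_general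
    {V : Type*} [Fintype V] (G : SimpleGraph V)
    (hdeg : ∀ v, 1 ≤ deg G v)
    (q : ℕ)
    (π : V → V → Equiv.Perm (Fin q))
    (hπ : ∀ u v, G.Adj u v → π v u = (π u v)⁻¹)
    (φ ρ : ℝ) (hφ : 0 < φ) (hcond : φ ≤ conductance G)
    (hρ0 : 0 < ρ) (hρ1 : ρ ≤ 1)
    (hopt : ∀ ψ : V → Fin q, ulcSatFrac G π ψ ≤ 1 - ρ) :
    ∀ S' : Set (V × Fin q), S'.Nonempty →
      vol (ulcExt G π hπ) S' ≤ vol (ulcExt G π hπ) Set.univ / q →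
      ρ * φ / (6 * q) ≤ cond (ulcExt G π hπ) S' := by
  intro S' ⟨⟨u₀, i₀⟩, hu₀⟩ hvol
  have : Nonempty (Fin q) := ⟨i₀⟩
  set G' := ulcExt G π hπ
  set μ := vol G Set.univ
  set T : Set V := {u | labelCount S' u ≠ 0}
  set ψ : V → Fin q := fun u => Classical.epsilon fun i => (u, i) ∈ S'
  have hψ : ∀ u i, (u, i) ∈ S' → (u, ψ u) ∈ S' := fun u i hi =>
    Classical.epsilon_spec (p := fun i => (u, i) ∈ S') ⟨i, hi⟩
  have hq : (1 : ℝ) ≤ q := by exact_mod_cast i₀.pos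
  have hW : 0 < vol G' S' :=
    vol_pos G' (fun p => (deg_ulcExt G π hπ p).symm ▸ hdeg p.1) ⟨_, hu₀⟩
  have hWμ : vol G' S' ≤ μ := by
    rwa [vol_ulcExt_univ, mul_div_cancel_left₀ _ (by positivity)] at hvol
  have hWT : vol G' S' ≤ q * vol G T :=
    (vol_ulcExt G π hπ S').symm ▸ sum_deg_mul_le_mul_vol G _ (labelCount_le S')
  have hcut : eB G T Tᶜ ≤ eB G' S' S'ᶜ := eB_labelled_le_eB_ulcExt_compl G π hπ hψ
  have hsound : ρ * μ ≤ eB G' S' S'ᶜ + 4 * vol G Tᶜ := by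
    have := vol_compl_eq_one_le G (labelCount S')
    rw [← vol_ulcExt G π hπ] at this
    linarith [mul_vol_univ_le_card_unsatPairs G π (hopt ψ), card_unsatPairs_le G π hπ hψ]
  rw [cond, div_le_div_iff₀ (by positivity) hW]
  linarith [mul_mul_le_of_cut_bounds G hφ.le hcond hρ0.le hρ1 hq hW.le hWμ hWT hcut hsound]

/-- If `I = (G,q,π)` is a Unique Label Cover instance with `q ≥ 2`,
`φ_G ≥ φ > 0` and `OPT(I) ≤ 1 - ρ` for some `0 < ρ ≤ 1`, then every nonempty set
`S'` of vertices of the label-extended graph `G'` with `μ_{G'}(S') ≤ μ_{G'}/q`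
has conductance at least `ρφ/(6q)`; that is, `φ_{G'}(q) ≥ ρφ/(6q)`. -/
theorem ulc_soundness_small_set_expansion
    {V : Type*} [Fintype V] (G : SimpleGraph V)
    (hdeg : ∀ v, 1 ≤ deg G v)
    (q : ℕ) (hq : 2 ≤ q)
    (π : V → V → Equiv.Perm (Fin q))
    (hπ : ∀ u v, G.Adj u v → π v u = (π u v)⁻¹)
    (φ ρ : ℝ) (hφ : 0 < φ) (hcond : φ ≤ conductance G)
    (hρ0 : 0 < ρ) (hρ1 : ρ ≤ 1)
    (hopt : ∀ ψ : V → Fin q, ulcSatFrac G π ψ ≤ 1 - ρ) :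
    ∀ S' : Set (V × Fin q), S'.Nonempty →
      vol (ulcExt G π hπ) S' ≤ vol (ulcExt G π hπ) Set.univ / q →
      ρ * φ / (6 * q) ≤ cond (ulcExt G π hπ) S' :=
  ulc_soundness_small_set_expansion_general G hdeg q π hπ φ ρ hφ hcond hρ0 hρ1 hopt

end Sublinear
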